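/- arXiv:2202.08652 — 4 statements merged into one kernel-verified Lean document; each statement's English description precedes it below -/
import Mathlib

section
/- For an n-dimensional inner product space with symmetric trace-free endomorphism E (playing the role of R̊ic) and an algebraic Weyl tensor W (i.e., a (0,4)-tensor with Riemann symmetries, trace-free in every pair of indices), one has the pointwise inequality |(n/(n-2)) tr(E³) - W_{ijkl} E_{ik} E_{jl}| ≤ √((n-2)/(2(n-1))) · (|W|² + (2n/(n-2)) |E|²)^{1/2} · |E|². -/
open Finset



namespace WCP
variable {n : ℕ}

noncomputable def d (i j : Fin n) : ℝ := if i = j then 1 else 0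

noncomputable def F (E : Matrix (Fin n) (Fin n) ℝ) (i j : Fin n) : ℝ := ∑ k, E i k * E k j

lemma sum3_rot {M : Type*} [AddCommMonoid M] (f : Fin n → Fin n → Fin n → M) :
    ∑ i, ∑ j, ∑ k, f i j k = ∑ j, ∑ k, ∑ i, f i j k := by
  rw [Finset.sum_comm]
  exact Finset.sum_congr rfl fun _ _ => Finset.sum_comm

lemma sum3_rot' {M : Type*} [AddCommMonoid M] (f : Fin n → Fin n → Fin n → M) :
    ∑ i, ∑ j, ∑ k, f i j k = ∑ k, ∑ i, ∑ j, f i j k := by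
  rw [sum3_rot, sum3_rot]

lemma sum4_factor (f g : Fin n → Fin n → ℝ) :
    ∑ i, ∑ j, ∑ k, ∑ l, f i k * g j l = (∑ i, ∑ k, f i k) * (∑ j, ∑ l, g j l) := by
  rw [Finset.sum_mul]
  refine Finset.sum_congr rfl fun i _ => ?_
  rw [Finset.sum_comm, Finset.sum_mul]
  refine Finset.sum_congr rfl fun k _ => ?_
  rw [Finset.mul_sum]
  exact Finset.sum_congr rfl fun j _ => (Finset.mul_sum _ _ _).symm

lemma sum4_pair (f : Fin n → Fin n → ℝ) :
    ∑ i, ∑ j, ∑ k, ∑ l, f i k * f j l * (f i l * f j k)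
      = ∑ k, ∑ l, (∑ i, f i k * f i l) * (∑ j, f j l * f j k) := by
  have h1 : ∀ i j, ∑ k, ∑ l, f i k * f j l * (f i l * f j k)
      = ∑ k, ∑ l, (f i k * f i l) * (f j l * f j k) := by
    intro i j; exact Finset.sum_congr rfl fun k _ => Finset.sum_congr rfl fun l _ => by ring
  calc ∑ i, ∑ j, ∑ k, ∑ l, f i k * f j l * (f i l * f j k)
      = ∑ i, ∑ j, ∑ k, ∑ l, (f i k * f i l) * (f j l * f j k) :=
        Finset.sum_congr rfl fun i _ => Finset.sum_congr rfl fun j _ => h1 i j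
    _ = ∑ k, ∑ l, ∑ i, ∑ j, (f i k * f i l) * (f j l * f j k) := by
        rw [sum3_rot']
        exact Finset.sum_congr rfl fun i _ => sum3_rot' _
    _ = ∑ k, ∑ l, (∑ i, f i k * f i l) * (∑ j, f j l * f j k) := by
        refine Finset.sum_congr rfl fun k _ => Finset.sum_congr rfl fun l _ => ?_
        rw [Finset.sum_mul]
        exact Finset.sum_congr rfl fun i _ => (Finset.mul_sum _ _ _).symm

variable {E A : Matrix (Fin n) (Fin n) ℝ}

lemma Fsymm (hE : ∀ i j, E i j = E j i) (i j : Fin n) : F E i j = F E j i := by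
  unfold F
  refine Finset.sum_congr rfl fun k _ => ?_
  rw [hE i k, hE k j]; ring

lemma trF (hE : ∀ i j, E i j = E j i) : ∑ i, F E i i = ∑ i, ∑ j, (E i j)^2 := by
  unfold F
  refine Finset.sum_congr rfl fun i _ => Finset.sum_congr rfl fun k _ => ?_
  rw [hE k i]; ring

lemma LVV (hE : ∀ i j, E i j = E j i) :
    ∑ i, ∑ j, ∑ k, ∑ l, (E i k * E j l - E i l * E j k)^2
      = 2*(∑ i, ∑ j, (E i j)^2)^2 - 2*(∑ i, ∑ j, (F E i j)^2) := by
  have expand : ∀ i j k l : Fin n, (E i k * E j l - E i l * E j k)^2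
      = (E i k)^2 * (E j l)^2 + (E i l)^2 * (E j k)^2
        - 2*(E i k * E j l * (E i l * E j k)) := by intros; ring
  calc ∑ i, ∑ j, ∑ k, ∑ l, (E i k * E j l - E i l * E j k)^2
      = (∑ i, ∑ j, ∑ k, ∑ l, (E i k)^2 * (E j l)^2)
        + (∑ i, ∑ j, ∑ k, ∑ l, (E i l)^2 * (E j k)^2)
        - 2 * (∑ i, ∑ j, ∑ k, ∑ l, E i k * E j l * (E i l * E j k)) := by
        simp only [expand, Finset.sum_add_distrib, Finset.sum_sub_distrib, ← Finset.mul_sum]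
    _ = 2*(∑ i, ∑ j, (E i j)^2)^2 - 2*(∑ i, ∑ j, (F E i j)^2) := by
        have h1 := sum4_factor (fun i k => (E i k)^2) (fun j l => (E j l)^2)
        have h2 : ∑ i : Fin n, ∑ j, ∑ k, ∑ l, (E i l)^2 * (E j k)^2
            = ∑ i : Fin n, ∑ j, ∑ k, ∑ l, (E i k)^2 * (E j l)^2 :=
          Finset.sum_congr rfl fun i _ => Finset.sum_congr rfl fun j _ => Finset.sum_comm
        have h3 := sum4_pair E
        have h4 : ∑ k : Fin n, ∑ l, (∑ i, E i k * E i l) * (∑ j, E j l * E j k)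
            = ∑ i, ∑ j, (F E i j)^2 := by
          refine Finset.sum_congr rfl fun k _ => Finset.sum_congr rfl fun l _ => ?_
          have e1 : ∑ i, E i k * E i l = F E k l :=
            Finset.sum_congr rfl fun i _ => by rw [hE i k]
          have e2 : ∑ j, E j l * E j k = F E l k :=
            Finset.sum_congr rfl fun j _ => by rw [hE j l]
          rw [e1, e2, Fsymm hE l k]; ring
        rw [h1, h2, h1, h3, h4]; ring

lemma LAF (c : ℝ) (hE : ∀ i j, E i j = E j i) :
    ∑ i, ∑ j, (F E i j - c * d i j) * F E i j
      = (∑ i, ∑ j, (F E i j)^2) - c * (∑ i, ∑ j, (E i j)^2) := by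
  have : ∀ i j : Fin n, (F E i j - c * d i j) * F E i j
      = (F E i j)^2 - c * (d i j * F E i j) := by intros; ring
  simp only [this, Finset.sum_sub_distrib, ← Finset.mul_sum]
  rw [← trF hE]
  congr 1
  congr 1
  refine Finset.sum_congr rfl fun i _ => ?_
  simp [d]

lemma LAA (c : ℝ) (hE : ∀ i j, E i j = E j i) :
    ∑ i, ∑ j, (F E i j - c * d i j)^2
      = (∑ i, ∑ j, (F E i j)^2) - 2 * c * (∑ i, ∑ j, (E i j)^2) + c^2 * n := by
  have : ∀ i j : Fin n, (F E i j - c * d i j)^2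
      = (F E i j)^2 - 2*c*(d i j * F E i j) + c^2 * (d i j * d i j) := by
    intro i j; unfold d; split <;> ring
  simp only [this, Finset.sum_add_distrib, Finset.sum_sub_distrib, ← Finset.mul_sum]
  rw [← trF hE]
  have hd : ∑ i : Fin n, ∑ j, d i j * d i j = n := by simp [d]
  have hdf : ∑ i : Fin n, ∑ j, d i j * F E i j = ∑ i, F E i i := by
    refine Finset.sum_congr rfl fun i _ => ?_
    simp [d]
  rw [hd, hdf]

lemma LEA (c : ℝ) (hE : ∀ i j, E i j = E j i) (htr : ∑ i, E i i = 0) :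
    ∑ i, ∑ j, E i j * (F E i j - c * d i j)
      = ∑ i, ∑ j, ∑ k, E i j * E j k * E k i := by
  have : ∀ i j : Fin n, E i j * (F E i j - c * d i j)
      = E i j * F E i j - c * (d i j * E i j) := by intros; ring
  simp only [this, Finset.sum_sub_distrib, ← Finset.mul_sum]
  have h0 : ∑ i : Fin n, ∑ j, d i j * E i j = 0 := by
    rw [← htr]
    refine Finset.sum_congr rfl fun i _ => ?_
    simp [d]
  rw [h0, mul_zero, sub_zero]
  unfold F
  simp only [Finset.mul_sum]
  refine Finset.sum_congr rfl fun i _ => Finset.sum_congr rfl fun j _ =>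
    Finset.sum_congr rfl fun k _ => ?_
  rw [hE i k, hE k j]
  ring

lemma LVG (hE : ∀ i j, E i j = E j i) (htr : ∑ i, E i i = 0) :
    ∑ i, ∑ j, ∑ k, ∑ l, (E i k * E j l - E i l * E j k) * (d i k * d j l - d i l * d j k)
      = -2 * ∑ i, ∑ j, (E i j)^2 := by
  simp only [d, mul_ite, ite_mul, one_mul, mul_one, zero_mul, mul_zero, sub_mul, mul_sub]
  simp [Finset.sum_ite_eq, Finset.sum_ite_eq', Finset.sum_add_distrib, Finset.sum_sub_distrib,
    Finset.sum_ite_irrel, Finset.sum_const, htr]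
  have h1 : ∑ x : Fin n, ∑ y, E x x * E y y = 0 := by
    rw [← Finset.sum_mul_sum, htr, zero_mul]
  have h2 : ∑ x : Fin n, ∑ y, E x y * E y x = ∑ i, ∑ j, (E i j)^2 := by
    refine Finset.sum_congr rfl fun x _ => Finset.sum_congr rfl fun y _ => ?_
    rw [hE y x]; ring
  rw [h1, h2]; ring

lemma LVP (htr : ∑ i, E i i = 0) :
    ∑ i, ∑ j, ∑ k, ∑ l, (E i k * E j l - E i l * E j k)
        * (A i k * d j l + A j l * d i k - A i l * d j k - A j k * d i l)
      = -4 * ∑ i, ∑ j, A i j * F E i j := by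
  simp only [d, mul_ite, ite_mul, one_mul, mul_one, zero_mul, mul_zero, sub_mul, mul_sub,
    mul_add, add_mul]
  simp [Finset.sum_ite_eq, Finset.sum_ite_eq', Finset.sum_add_distrib, Finset.sum_sub_distrib,
    Finset.sum_ite_irrel, Finset.sum_const, htr]
  have hS1 : ∑ x : Fin n, ∑ y : Fin n, ∑ z : Fin n, E x z * E y y * A x z = 0 := by
    have h : ∀ x : Fin n, ∑ y : Fin n, ∑ z : Fin n, E x z * E y y * A x z
        = (∑ y, E y y) * (∑ z, E x z * A x z) := by
      intro x
      rw [Finset.sum_mul_sum]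
      exact Finset.sum_congr rfl fun y _ => Finset.sum_congr rfl fun z _ => by ring
    simp [h, htr]
  have hS3 : ∑ x : Fin n, ∑ y : Fin n, ∑ z : Fin n, E x x * E y z * A y z = 0 := by
    have h : ∀ x : Fin n, ∑ y : Fin n, ∑ z : Fin n, E x x * E y z * A y z
        = E x x * ∑ y : Fin n, ∑ z : Fin n, E y z * A y z := by
      intro x
      rw [Finset.mul_sum]
      exact Finset.sum_congr rfl fun y _ => by
        rw [Finset.mul_sum]
        exact Finset.sum_congr rfl fun z _ => by ring
    rw [Finset.sum_congr rfl fun x _ => h x, ← Finset.sum_mul, htr, zero_mul]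
  have hS2 : ∑ x : Fin n, ∑ y : Fin n, ∑ z : Fin n, E x y * E y z * A x z
      = ∑ i, ∑ j, A i j * F E i j := by
    refine Finset.sum_congr rfl fun x _ => ?_
    rw [Finset.sum_comm]
    refine Finset.sum_congr rfl fun z _ => ?_
    rw [F, Finset.mul_sum]
    exact Finset.sum_congr rfl fun y _ => by ring
  have hS4 : ∑ x : Fin n, ∑ y : Fin n, ∑ z : Fin n, E x z * E y x * A y z
      = ∑ i, ∑ j, A i j * F E i j := by
    rw [sum3_rot]
    refine Finset.sum_congr rfl fun y _ => Finset.sum_congr rfl fun z _ => ?_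
    rw [F, Finset.mul_sum]
    exact Finset.sum_congr rfl fun x _ => by ring
  rw [hS1, hS2, hS3, hS4]
  ring

lemma LPG (htrA : ∑ i, A i i = 0) :
    ∑ i, ∑ j, ∑ k, ∑ l, (A i k * d j l + A j l * d i k - A i l * d j k - A j k * d i l)
        * (d i k * d j l - d i l * d j k) = 0 := by
  simp only [d, mul_ite, ite_mul, one_mul, mul_one, zero_mul, mul_zero, sub_mul, mul_sub,
    mul_add, add_mul]
  simp [Finset.sum_ite_eq, Finset.sum_ite_eq', Finset.sum_add_distrib, Finset.sum_sub_distrib,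
    Finset.sum_ite_irrel, Finset.sum_const, htrA]
  rw [← Finset.mul_sum, htrA, mul_zero]

lemma LPP (htrA : ∑ i, A i i = 0) :
    ∑ i, ∑ j, ∑ k, ∑ l, (A i k * d j l + A j l * d i k - A i l * d j k - A j k * d i l)^2
      = 4*((n:ℝ)-2) * ∑ i, ∑ j, (A i j)^2 := by
  have expand : ∀ i j k l : Fin n, (A i k * d j l + A j l * d i k - A i l * d j k - A j k * d i l)^2
      = (A i k * d j l + A j l * d i k - A i l * d j k - A j k * d i l)
        * (A i k * d j l + A j l * d i k - A i l * d j k - A j k * d i l) := by intros; ring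
  simp only [expand]
  simp only [d, mul_ite, ite_mul, one_mul, mul_one, zero_mul, mul_zero, sub_mul, mul_sub,
    mul_add, add_mul]
  simp [Finset.sum_ite_eq, Finset.sum_ite_eq', Finset.sum_add_distrib, Finset.sum_sub_distrib,
    Finset.sum_ite_irrel, Finset.sum_const, htrA]
  have h1 : ∑ x : Fin n, ∑ y : Fin n, A y y * A x x = 0 := by
    rw [Finset.sum_comm, ← Finset.sum_mul_sum, htrA, zero_mul]
  have h2 : ∑ x : Fin n, ∑ y : Fin n, A x x * A y y = 0 := by
    rw [← Finset.sum_mul_sum, htrA, zero_mul]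
  have h3 : ∑ x : Fin n, ∑ y : Fin n, A y x * A y x = ∑ x : Fin n, ∑ y : Fin n, A x y * A x y :=
    Finset.sum_comm
  have h4 : ∑ x : Fin n, (n : ℝ) * ∑ y : Fin n, A x y * A x y
      = (n : ℝ) * ∑ x : Fin n, ∑ y : Fin n, A x y * A x y := by
    rw [Finset.mul_sum]
  have hsq : ∑ i : Fin n, ∑ j : Fin n, (A i j)^2 = ∑ x : Fin n, ∑ y : Fin n, A x y * A x y := by
    refine Finset.sum_congr rfl fun i _ => Finset.sum_congr rfl fun j _ => sq (A i j) ▸ by ring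
  rw [h1, h2, h3, h4, hsq]
  ring

lemma LGG : ∑ i : Fin n, ∑ j, ∑ k, ∑ l, (d i k * d j l - d i l * d j k)^2
    = 2*(n:ℝ)^2 - 2*n := by
  simp only [d, sub_sq, mul_pow, mul_ite, ite_mul, one_mul, mul_one, zero_mul,
    mul_zero, ite_pow, one_pow, zero_pow]
  simp [Finset.sum_ite_eq, Finset.sum_ite_eq', Finset.sum_add_distrib, Finset.sum_sub_distrib,
    Finset.sum_ite_irrel, Finset.sum_const]
  ring

variable {W : Fin n → Fin n → Fin n → Fin n → ℝ}

lemma tr24 (hW1 : ∀ i j k l, W i j k l = -W j i k l) (hW2 : ∀ i j k l, W i j k l = -W i j l k)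
    (hWtr : ∀ j l, ∑ i, W i j i l = 0) (i k : Fin n) : ∑ j, W i j k j = 0 := by
  have : ∀ j, W i j k j = W j i j k := by
    intro j; rw [hW1, hW2]; ring
  rw [Finset.sum_congr rfl fun j _ => this j]
  exact hWtr i k

lemma tr23 (hW1 : ∀ i j k l, W i j k l = -W j i k l)
    (hWtr : ∀ j l, ∑ i, W i j i l = 0) (i l : Fin n) : ∑ j, W i j j l = 0 := by
  have : ∀ j, W i j j l = -W j i j l := fun j => hW1 i j j l
  rw [Finset.sum_congr rfl fun j _ => this j, Finset.sum_neg_distrib, hWtr i l, neg_zero]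

lemma tr14 (hW2 : ∀ i j k l, W i j k l = -W i j l k)
    (hWtr : ∀ j l, ∑ i, W i j i l = 0) (j k : Fin n) : ∑ i, W i j k i = 0 := by
  have : ∀ i, W i j k i = -W i j i k := fun i => hW2 i j k i
  rw [Finset.sum_congr rfl fun i _ => this i, Finset.sum_neg_distrib, hWtr j k, neg_zero]

lemma LWG (hW2 : ∀ i j k l, W i j k l = -W i j l k)
    (hWtr : ∀ j l, ∑ i, W i j i l = 0) :
    ∑ i, ∑ j, ∑ k, ∑ l, W i j k l * (d i k * d j l - d i l * d j k) = 0 := by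
  simp only [d, mul_ite, ite_mul, one_mul, mul_one, zero_mul, mul_zero, sub_mul, mul_sub,
    mul_add, add_mul]
  simp [Finset.sum_ite_eq, Finset.sum_ite_eq', Finset.sum_add_distrib, Finset.sum_sub_distrib,
    Finset.sum_ite_irrel, Finset.sum_const]
  have g1 : ∑ x : Fin n, ∑ y : Fin n, W x y x y = 0 := by
    rw [Finset.sum_comm]
    exact Finset.sum_eq_zero fun y _ => hWtr y y
  have g2 : ∑ x : Fin n, ∑ y : Fin n, W x y y x = 0 := by
    have : ∀ x y : Fin n, W x y y x = -W x y x y := fun x y => hW2 x y y x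
    simp only [this, Finset.sum_neg_distrib, g1, neg_zero]
  rw [g1, g2, sub_zero]

lemma LWP (hW1 : ∀ i j k l, W i j k l = -W j i k l) (hW2 : ∀ i j k l, W i j k l = -W i j l k)
    (hWtr : ∀ j l, ∑ i, W i j i l = 0) :
    ∑ i, ∑ j, ∑ k, ∑ l, W i j k l
        * (A i k * d j l + A j l * d i k - A i l * d j k - A j k * d i l) = 0 := by
  simp only [d, mul_ite, ite_mul, one_mul, mul_one, zero_mul, mul_zero, sub_mul, mul_sub,
    mul_add, add_mul]
  simp [Finset.sum_ite_eq, Finset.sum_ite_eq', Finset.sum_add_distrib, Finset.sum_sub_distrib,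
    Finset.sum_ite_irrel, Finset.sum_const]
  have tA : ∑ x : Fin n, ∑ y : Fin n, ∑ z : Fin n, W x y z y * A x z = 0 := by
    refine Finset.sum_eq_zero fun x _ => ?_
    rw [Finset.sum_comm]
    refine Finset.sum_eq_zero fun z _ => ?_
    rw [← Finset.sum_mul, tr24 hW1 hW2 hWtr x z, zero_mul]
  have tB : ∑ x : Fin n, ∑ y : Fin n, ∑ z : Fin n, W x y x z * A y z = 0 := by
    rw [sum3_rot]
    refine Finset.sum_eq_zero fun y _ => Finset.sum_eq_zero fun z _ => ?_
    rw [← Finset.sum_mul, hWtr y z, zero_mul]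
  have tC : ∑ x : Fin n, ∑ y : Fin n, ∑ z : Fin n, W x y y z * A x z = 0 := by
    refine Finset.sum_eq_zero fun x _ => ?_
    rw [Finset.sum_comm]
    refine Finset.sum_eq_zero fun z _ => ?_
    rw [← Finset.sum_mul, tr23 hW1 hWtr x z, zero_mul]
  have tD : ∑ x : Fin n, ∑ y : Fin n, ∑ z : Fin n, W x y z x * A y z = 0 := by
    rw [sum3_rot]
    refine Finset.sum_eq_zero fun y _ => Finset.sum_eq_zero fun z _ => ?_
    rw [← Finset.sum_mul, tr14 hW2 hWtr y z, zero_mul]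
  rw [tA, tB, tC, tD]
  ring

lemma LWV (hW2 : ∀ i j k l, W i j k l = -W i j l k) :
    ∑ i, ∑ j, ∑ k, ∑ l, W i j k l * (E i k * E j l - E i l * E j k)
      = 2 * ∑ i, ∑ j, ∑ k, ∑ l, W i j k l * E i k * E j l := by
  have key : ∀ i j : Fin n, ∑ k, ∑ l, W i j k l * (E i l * E j k)
      = -∑ k, ∑ l, W i j k l * E i k * E j l := by
    intro i j
    rw [Finset.sum_comm]
    have : ∀ k l : Fin n, W i j l k * (E i k * E j l) = -(W i j k l * E i k * E j l) := by
      intro k l; rw [hW2 i j l k]; ring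
    simp only [this, Finset.sum_neg_distrib]
  simp only [mul_sub, Finset.sum_sub_distrib]
  have h2 : ∑ i : Fin n, ∑ j : Fin n, ∑ k : Fin n, ∑ l : Fin n, W i j k l * (E i l * E j k)
      = -∑ i : Fin n, ∑ j : Fin n, ∑ k : Fin n, ∑ l : Fin n, W i j k l * E i k * E j l := by
    simp only [key, Finset.sum_neg_distrib]
  have h1 : ∑ i : Fin n, ∑ j : Fin n, ∑ k : Fin n, ∑ l : Fin n, W i j k l * (E i k * E j l)
      = ∑ i : Fin n, ∑ j : Fin n, ∑ k : Fin n, ∑ l : Fin n, W i j k l * E i k * E j l := by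
    simp only [mul_assoc]
  rw [h1, h2]
  ring

end WCP

open Finset WCP in
set_option maxHeartbeats 2000000 in
/-- For a symmetric trace-free endomorphism `E` and an algebraic Weyl
tensor `W` (Riemann symmetries, first Bianchi identity, trace-free in every pair of
indices) on an `n`-dimensional inner product space, one has the pointwise inequality
`|(n/(n-2)) tr(E³) - W_{ijkl} E_{ik} E_{jl}|
  ≤ √((n-2)/(2(n-1))) · (|W|² + (2n/(n-2)) |E|²)^{1/2} · |E|²`. -/
theorem weyl_cubic_pinching_inequality (n : ℕ) (hn : 3 ≤ n)
    (E : Matrix (Fin n) (Fin n) ℝ) (hEsym : E.IsSymm) (hEtr : Matrix.trace E = 0)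
    (W : Fin n → Fin n → Fin n → Fin n → ℝ)
    (hW1 : ∀ i j k l, W i j k l = -W j i k l)
    (hW2 : ∀ i j k l, W i j k l = -W i j l k)
    (hW3 : ∀ i j k l, W i j k l = W k l i j)
    (hWB : ∀ i j k l, W i j k l + W j k i l + W k i j l = 0)
    (hWtr : ∀ j l, ∑ i, W i j i l = 0) :
    |((n : ℝ) / ((n : ℝ) - 2)) * (∑ i, ∑ j, ∑ k, E i j * E j k * E k i)
        - ∑ i, ∑ j, ∑ k, ∑ l, W i j k l * E i k * E j l|
      ≤ Real.sqrt (((n : ℝ) - 2) / (2 * ((n : ℝ) - 1)))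
          * Real.sqrt ((∑ i, ∑ j, ∑ k, ∑ l, (W i j k l) ^ 2)
              + (2 * (n : ℝ) / ((n : ℝ) - 2)) * ∑ i, ∑ j, (E i j) ^ 2)
          * ∑ i, ∑ j, (E i j) ^ 2 := by
  have hE : ∀ i j, E i j = E j i := fun i j => hEsym.apply j i
  have htr : ∑ i, E i i = 0 := by simpa [Matrix.trace, Matrix.diag] using hEtr
  have hn3 : (3:ℝ) ≤ (n:ℝ) := by exact_mod_cast hn
  have hn2 : (0:ℝ) < (n:ℝ) - 2 := by linarith
  have hn1 : (0:ℝ) < (n:ℝ) - 1 := by linarith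
  have hn0 : (0:ℝ) < (n:ℝ) := by linarith
  set s2 := ∑ i, ∑ j, (E i j)^2 with hs2def
  have hs2 : 0 ≤ s2 := Finset.sum_nonneg fun i _ => Finset.sum_nonneg fun j _ => sq_nonneg _
  set s4 := ∑ i, ∑ j, (F E i j)^2 with hs4def
  set t3 := ∑ i, ∑ j, ∑ k, E i j * E j k * E k i with ht3def
  set S := ∑ i, ∑ j, ∑ k, ∑ l, W i j k l * E i k * E j l with hSdef
  set w2 := ∑ i, ∑ j, ∑ k, ∑ l, (W i j k l)^2 with hw2def
  have hw2 : 0 ≤ w2 := by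
    rw [hw2def]
    refine Finset.sum_nonneg fun i _ => Finset.sum_nonneg fun j _ =>
      Finset.sum_nonneg fun k _ => Finset.sum_nonneg fun l _ => sq_nonneg _
  set a : ℝ := 1/((n:ℝ)-2) with hadef
  set b : ℝ := s2/((n:ℝ)*((n:ℝ)-1)) with hbdef
  set c : ℝ := s2/(n:ℝ) with hcdef
  set μ2 : ℝ := 2 * (n:ℝ) / ((n:ℝ) - 2) with hμ2def
  have hμ2nonneg : 0 ≤ μ2 := by
    rw [hμ2def]; positivity
  set μ : ℝ := Real.sqrt μ2 with hμdef
  have hμ : μ^2 = μ2 := Real.sq_sqrt hμ2nonneg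
  -- the trace-free part A of E²
  have htrA : ∑ i : Fin n, (F E i i - c * d i i) = 0 := by
    rw [Finset.sum_sub_distrib, trF hE, ← hs2def]
    have h1 : ∑ i : Fin n, c * d i i = c * n := by simp [d, Finset.mul_sum, mul_comm]
    have h2 : c * n = s2 := by
      rw [hcdef]
      exact div_mul_cancel₀ s2 hn0.ne'
    rw [h1, h2, sub_self]
  -- component lemmas instantiated
  have hAA : ∑ i, ∑ j, (F E i j - c * d i j)^2 = s4 - 2*c*s2 + c^2*n := LAA c hE
  have hAF : ∑ i, ∑ j, (F E i j - c * d i j) * F E i j = s4 - c * s2 := LAF c hE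
  have hEA : ∑ i, ∑ j, E i j * (F E i j - c * d i j) = t3 := LEA c hE htr
  have hVV : ∑ i, ∑ j, ∑ k, ∑ l, (E i k * E j l - E i l * E j k)^2 = 2*s2^2 - 2*s4 := LVV hE
  have hVP : ∑ i, ∑ j, ∑ k, ∑ l, (E i k * E j l - E i l * E j k)
      * ((F E i k - c * d i k) * d j l + (F E j l - c * d j l) * d i k
        - (F E i l - c * d i l) * d j k - (F E j k - c * d j k) * d i l)
      = -4 * ∑ i, ∑ j, (F E i j - c * d i j) * F E i j :=
    LVP (A := Matrix.of fun i j => F E i j - c * d i j) htr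
  have hVG : ∑ i, ∑ j, ∑ k, ∑ l, (E i k * E j l - E i l * E j k) * (d i k * d j l - d i l * d j k)
      = -2 * s2 := LVG hE htr
  have hPP : ∑ i, ∑ j, ∑ k, ∑ l, ((F E i k - c * d i k) * d j l + (F E j l - c * d j l) * d i k
        - (F E i l - c * d i l) * d j k - (F E j k - c * d j k) * d i l)^2
      = 4*((n:ℝ)-2) * ∑ i, ∑ j, (F E i j - c * d i j)^2 :=
    LPP (A := Matrix.of fun i j => F E i j - c * d i j) htrA
  have hPG : ∑ i, ∑ j, ∑ k, ∑ l, ((F E i k - c * d i k) * d j l + (F E j l - c * d j l) * d i k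
        - (F E i l - c * d i l) * d j k - (F E j k - c * d j k) * d i l)
        * (d i k * d j l - d i l * d j k) = 0 :=
    LPG (A := Matrix.of fun i j => F E i j - c * d i j) htrA
  have hGG : ∑ i : Fin n, ∑ j, ∑ k, ∑ l, (d i k * d j l - d i l * d j k)^2 = 2*(n:ℝ)^2 - 2*n := LGG
  have hWV : ∑ i, ∑ j, ∑ k, ∑ l, W i j k l * (E i k * E j l - E i l * E j k) = 2 * S := LWV hW2
  have hWP : ∑ i, ∑ j, ∑ k, ∑ l, W i j k l
      * ((F E i k - c * d i k) * d j l + (F E j l - c * d j l) * d i k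
        - (F E i l - c * d i l) * d j k - (F E j k - c * d j k) * d i l) = 0 :=
    LWP (A := Matrix.of fun i j => F E i j - c * d i j) hW1 hW2 hWtr
  have hWG : ∑ i, ∑ j, ∑ k, ∑ l, W i j k l * (d i k * d j l - d i l * d j k) = 0 := LWG hW2 hWtr
  -- Cauchy-Schwarz set-up
  set uu : (Fin n × Fin n × Fin n × Fin n) ⊕ (Fin n × Fin n) → ℝ :=
    Sum.elim (fun p => W p.1 p.2.1 p.2.2.1 p.2.2.2) (fun q => μ * E q.1 q.2) with huudef
  set vv : (Fin n × Fin n × Fin n × Fin n) ⊕ (Fin n × Fin n) → ℝ :=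
    Sum.elim (fun p =>
      (E p.1 p.2.2.1 * E p.2.1 p.2.2.2 - E p.1 p.2.2.2 * E p.2.1 p.2.2.1)
      + a * ((F E p.1 p.2.2.1 - c * d p.1 p.2.2.1) * d p.2.1 p.2.2.2
          + (F E p.2.1 p.2.2.2 - c * d p.2.1 p.2.2.2) * d p.1 p.2.2.1
          - (F E p.1 p.2.2.2 - c * d p.1 p.2.2.2) * d p.2.1 p.2.2.1
          - (F E p.2.1 p.2.2.1 - c * d p.2.1 p.2.2.1) * d p.1 p.2.2.2)
      + b * (d p.1 p.2.2.1 * d p.2.1 p.2.2.2 - d p.1 p.2.2.2 * d p.2.1 p.2.2.1))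
      (fun q => -(μ * (F E q.1 q.2 - c * d q.1 q.2))) with hvvdef
  have cs := Finset.sum_mul_sq_le_sq_mul_sq Finset.univ uu vv
  have e1 : ∑ x, uu x * vv x = 2*S - μ2*t3 := by
    rw [huudef, hvvdef]
    simp only [Fintype.sum_sum_type, Fintype.sum_prod_type, Sum.elim_inl, Sum.elim_inr]
    have hsplit : ∀ i j k l : Fin n, W i j k l *
        ((E i k * E j l - E i l * E j k)
          + a * ((F E i k - c * d i k) * d j l + (F E j l - c * d j l) * d i k
              - (F E i l - c * d i l) * d j k - (F E j k - c * d j k) * d i l)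
          + b * (d i k * d j l - d i l * d j k))
        = W i j k l * (E i k * E j l - E i l * E j k)
          + a * (W i j k l * ((F E i k - c * d i k) * d j l + (F E j l - c * d j l) * d i k
              - (F E i l - c * d i l) * d j k - (F E j k - c * d j k) * d i l))
          + b * (W i j k l * (d i k * d j l - d i l * d j k)) := by intros; ring
    have hsplit2 : ∀ i j : Fin n, (μ * E i j) * -(μ * (F E i j - c * d i j))
        = -(μ^2 * (E i j * (F E i j - c * d i j))) := by intros; ring
    simp only [hsplit, hsplit2, Finset.sum_add_distrib, Finset.sum_neg_distrib,
      ← Finset.mul_sum]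
    rw [hWV, hWP, hWG, hEA, hμ]
    ring
  have e2 : ∑ x, uu x ^ 2 = w2 + μ2 * s2 := by
    rw [huudef]
    simp only [Fintype.sum_sum_type, Fintype.sum_prod_type, Sum.elim_inl, Sum.elim_inr]
    have h : ∀ i j : Fin n, (μ * E i j)^2 = μ^2 * (E i j)^2 := by intros; ring
    simp only [h, ← Finset.mul_sum]
    rw [hμ, ← hs2def, ← hw2def]
  have e3 : ∑ x, vv x ^ 2 = 2*((n:ℝ)-2)/((n:ℝ)-1) * s2^2 := by
    rw [hvvdef]
    simp only [Fintype.sum_sum_type, Fintype.sum_prod_type, Sum.elim_inl, Sum.elim_inr]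
    have hsq : ∀ i j k l : Fin n,
        ((E i k * E j l - E i l * E j k)
          + a * ((F E i k - c * d i k) * d j l + (F E j l - c * d j l) * d i k
              - (F E i l - c * d i l) * d j k - (F E j k - c * d j k) * d i l)
          + b * (d i k * d j l - d i l * d j k))^2
        = (E i k * E j l - E i l * E j k)^2
          + a^2 * ((F E i k - c * d i k) * d j l + (F E j l - c * d j l) * d i k
              - (F E i l - c * d i l) * d j k - (F E j k - c * d j k) * d i l)^2
          + b^2 * (d i k * d j l - d i l * d j k)^2
          + 2*a * ((E i k * E j l - E i l * E j k)
            * ((F E i k - c * d i k) * d j l + (F E j l - c * d j l) * d i k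
              - (F E i l - c * d i l) * d j k - (F E j k - c * d j k) * d i l))
          + 2*b * ((E i k * E j l - E i l * E j k) * (d i k * d j l - d i l * d j k))
          + 2*(a*b) * (((F E i k - c * d i k) * d j l + (F E j l - c * d j l) * d i k
              - (F E i l - c * d i l) * d j k - (F E j k - c * d j k) * d i l)
            * (d i k * d j l - d i l * d j k)) := by intros; ring
    have hsq2 : ∀ i j : Fin n, (-(μ * (F E i j - c * d i j)))^2
        = μ^2 * (F E i j - c * d i j)^2 := by intros; ring
    simp only [hsq, hsq2, Finset.sum_add_distrib, ← Finset.mul_sum]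
    rw [hVV, hVP, hVG, hPP, hPG, hGG, hμ, hAA, hAF]
    rw [hadef, hbdef, hcdef, hμ2def]
    field_simp
    ring
  rw [e1, e2, e3] at cs
  -- final algebra
  have hrel : 2*S - μ2*t3 = -2*((n:ℝ)/((n:ℝ)-2)*t3 - S) := by
    rw [hμ2def]; field_simp; ring
  have hL2 : ((n:ℝ)/((n:ℝ)-2)*t3 - S)^2
      ≤ (((n:ℝ)-2)/(2*((n:ℝ)-1))) * ((w2 + μ2*s2) * s2^2) := by
    have hid : (2*S - μ2*t3)^2 = 4 * ((n:ℝ)/((n:ℝ)-2)*t3 - S)^2 := by rw [hrel]; ring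
    have hCD : (w2 + μ2*s2) * (2*((n:ℝ)-2)/((n:ℝ)-1) * s2^2)
        = 4 * ((((n:ℝ)-2)/(2*((n:ℝ)-1))) * ((w2 + μ2*s2) * s2^2)) := by
      field_simp; ring
    rw [hid, hCD] at cs
    linarith
  have hc1 : (0:ℝ) ≤ ((n:ℝ)-2)/(2*((n:ℝ)-1)) := by positivity
  have hc2 : (0:ℝ) ≤ w2 + μ2*s2 := add_nonneg hw2 (mul_nonneg hμ2nonneg hs2)
  calc |(n:ℝ)/((n:ℝ)-2)*t3 - S| = Real.sqrt (((n:ℝ)/((n:ℝ)-2)*t3 - S)^2) :=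
        (Real.sqrt_sq_eq_abs _).symm
    _ ≤ Real.sqrt ((((n:ℝ)-2)/(2*((n:ℝ)-1))) * ((w2 + μ2*s2) * s2^2)) :=
        Real.sqrt_le_sqrt hL2
    _ = Real.sqrt (((n:ℝ)-2)/(2*((n:ℝ)-1))) * Real.sqrt (w2 + μ2*s2) * s2 := by
        rw [Real.sqrt_mul hc1, Real.sqrt_mul hc2, Real.sqrt_sq hs2, mul_assoc]
end

section
/- Let (M^n, g, f) be a Miao-Tam critical metric. Then the Ricci tensor, Cotton tensor C, and curvature tensor satisfy ∇_j f R_{ik} - ∇_i f R_{jk} = f C_{ijk} - R_{ijkl} ∇_l f - (R/(n-1))(∇_i f g_{jk} - ∇_j f g_{ik}). -/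
open Finset

/-- Pointwise identity for Miao-Tam critical metrics, in an orthonormal
frame.  Data at a point: `f` and its gradient `v = ∇f`, Hessian `H`, Ricci tensor
`Ric` with covariant derivative `DRic` (`DRic i j k = ∇_i R_{jk}`), third derivatives
`DH i j k = ∇_i ∇_j ∇_k f`, Riemann tensor `Rm`, scalar curvature `R` (constant, so
`∇_i R = ∑_k ∇_i R_{kk} = 0`).  Hypotheses: the Miao-Tam equation, its covariant
derivative, and the Ricci commutation identity.  The Cotton tensor is
`C_{ijk} = ∇_i R_{jk} - ∇_j R_{ik} - (1/(2(n-1)))(∇_i R g_{jk} - ∇_j R g_{ik})`.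
Conclusion: `∇_j f R_{ik} - ∇_i f R_{jk}
  = f C_{ijk} - R_{ijkl} ∇_l f - (R/(n-1))(∇_i f g_{jk} - ∇_j f g_{ik})`. -/
theorem miaoTam_cotton_identity (n : ℕ) (hn : 3 ≤ n) (f : ℝ) (v : Fin n → ℝ)
    (H Ric : Matrix (Fin n) (Fin n) ℝ)
    (DH DRic : Fin n → Fin n → Fin n → ℝ)
    (Rm : Fin n → Fin n → Fin n → Fin n → ℝ) (R : ℝ)
    (hHsym : H.IsSymm) (hRicsym : Ric.IsSymm)
    (hR : R = Matrix.trace Ric)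
    -- constant scalar curvature: ∇_i R = g^{jk} ∇_i R_{jk} = 0
    (hDR : ∀ i, (∑ k, DRic i k k) = 0)
    -- the Miao-Tam equation  -(Δf) g + Hess f - f Ric = g
    (hMT : (-(Matrix.trace H)) • (1 : Matrix (Fin n) (Fin n) ℝ) + H - f • Ric
            = (1 : Matrix (Fin n) (Fin n) ℝ))
    -- its covariant derivative:  -(∇_i Δf) g_{jk} + ∇_i∇_j∇_k f - ∇_i f R_{jk} - f ∇_i R_{jk} = 0
    (hDMT : ∀ i j k,
      -(∑ m, DH i m m) * (if j = k then (1 : ℝ) else 0) + DH i j k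
        - v i * Ric j k - f * DRic i j k = 0)
    -- Ricci commutation identity for the Hessian of f
    (hComm : ∀ i j k, DH i j k - DH j i k = ∑ l, Rm i j k l * v l) :
    let C : Fin n → Fin n → Fin n → ℝ := fun i j k =>
      DRic i j k - DRic j i k
        - (1 / (2 * ((n : ℝ) - 1)))
            * ((∑ m, DRic i m m) * (if j = k then (1 : ℝ) else 0)
                - (∑ m, DRic j m m) * (if i = k then (1 : ℝ) else 0))
    ∀ i j k,
      v j * Ric i k - v i * Ric j k
        = f * C i j k - (∑ l, Rm i j k l * v l)
            - (R / ((n : ℝ) - 1))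
                * (v i * (if j = k then (1 : ℝ) else 0)
                    - v j * (if i = k then (1 : ℝ) else 0)) := by
  intro C i j k
  have hn1 : ((n : ℝ) - 1) ≠ 0 := by
    have : (3:ℝ) ≤ (n:ℝ) := by exact_mod_cast hn
    intro h; linarith
  have hA : ∀ i, (∑ m, DH i m m) = -(R * v i) / ((n : ℝ) - 1) := by
    intro i
    have hsum : ∑ k, (-(∑ m, DH i m m) * (if k = k then (1 : ℝ) else 0) + DH i k k
        - v i * Ric k k - f * DRic i k k) = 0 :=
      Finset.sum_eq_zero fun k _ => hDMT i k k
    have htr : (∑ k, Ric k k) = R := by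
      rw [hR, Matrix.trace]; simp [Matrix.diag]
    simp only [if_pos rfl, mul_one] at hsum
    rw [Finset.sum_sub_distrib, Finset.sum_sub_distrib, Finset.sum_add_distrib,
        Finset.sum_const, ← Finset.mul_sum, ← Finset.mul_sum, htr, hDR i] at hsum
    simp only [Finset.card_univ, Fintype.card_fin, nsmul_eq_mul, mul_zero, sub_zero, if_true, mul_one] at hsum
    field_simp
    linarith
  have e1 := hDMT i j k
  have e2 := hDMT j i k
  have e3 := hComm i j k
  simp only [C]
  linear_combination e1 - e2 - e3
    + (if j = k then (1:ℝ) else 0) * hA i - (if i = k then (1:ℝ) else 0) * hA j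
    + (f / (2 * ((n:ℝ) - 1)) * (if j = k then (1:ℝ) else 0)) * hDR i
    - (f / (2 * ((n:ℝ) - 1)) * (if i = k then (1:ℝ) else 0)) * hDR j
end

section
/- Let (M^n, g, f) be a Miao-Tam critical metric whose potential satisfies |∇f|² + R f²/(n(n-1)) + 2f/(n-1) = c for a constant c. Then combining Bochner's formula (1/2)Δ|∇f|² = Ric(∇f,∇f) + ⟨∇Δf, ∇f⟩ + |Hess f|² with the critical metric equations yields |Hess̊ f|² + R̊ic(∇f, ∇f) = 0 pointwise, where Hess̊ f and R̊ic are the trace-free Hessian and trace-free Ricci tensor. -/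
open Finset

/-- If the potential of a Miao-Tam critical metric satisfies
`|∇f|² + R f²/(n(n-1)) + 2f/(n-1) = c` for a constant `c`, then combining Bochner's
formula `(1/2)Δ|∇f|² = Ric(∇f,∇f) + ⟨∇Δf, ∇f⟩ + |Hess f|²` with the critical metric
equations yields `|Hess̊ f|² + R̊ic(∇f,∇f) = 0` pointwise.  Pointwise model in an
orthonormal frame: `v = ∇f`, `H = Hess f`, `Δf = trace H`, `L = Δ|∇f|²` obtained from
the Laplacian of the constancy hypothesis, and `DLap = ∇Δf = -(R/(n-1))∇f`. -/
theorem miaoTam_bochner_traceless (n : ℕ) (hn : 3 ≤ n)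
    (f R L c : ℝ) (v DLap : Fin n → ℝ) (H Ric : Matrix (Fin n) (Fin n) ℝ)
    (hHsym : H.IsSymm) (hRicsym : Ric.IsSymm)
    (hR : R = Matrix.trace Ric)
    (hMT : (-(Matrix.trace H)) • (1 : Matrix (Fin n) (Fin n) ℝ) + H - f • Ric
            = (1 : Matrix (Fin n) (Fin n) ℝ))
    (hconst : (∑ i, (v i) ^ 2) + R * f ^ 2 / ((n : ℝ) * ((n : ℝ) - 1))
                + 2 * f / ((n : ℝ) - 1) = c)
    -- Laplacian of the constancy hypothesis, using Δ(f²) = 2fΔf + 2|∇f|²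
    (hL : L = -(R / ((n : ℝ) * ((n : ℝ) - 1)))
                * (2 * f * Matrix.trace H + 2 * ∑ i, (v i) ^ 2)
            - (2 / ((n : ℝ) - 1)) * Matrix.trace H)
    -- ∇Δf = -(R/(n-1)) ∇f (from the trace equation, R constant)
    (hDLap : ∀ i, DLap i = -(R / ((n : ℝ) - 1)) * v i)
    -- Bochner's formula
    (hBochner : (1 / 2) * L
        = (∑ i, ∑ j, Ric i j * v i * v j) + (∑ i, DLap i * v i)
            + ∑ i, ∑ j, (H i j) ^ 2) :
    (∑ i, ∑ j, ((H - (Matrix.trace H / (n : ℝ)) • 1) i j) ^ 2)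
      + (∑ i, ∑ j, ((Ric - (R / (n : ℝ)) • 1) i j) * v i * v j) = 0 := by
  set N : ℝ := (n : ℝ) with hNdef
  have hN3 : (3 : ℝ) ≤ N := by rw [hNdef]; exact_mod_cast hn
  have hN0 : N ≠ 0 := by linarith
  have hN1 : N - 1 ≠ 0 := by linarith
  set t : ℝ := Matrix.trace H with ht
  set S : ℝ := ∑ i, (v i) ^ 2 with hS
  set Q : ℝ := ∑ i, ∑ j, (H i j) ^ 2 with hQ
  set P : ℝ := ∑ i, ∑ j, Ric i j * v i * v j with hP
  set D : ℝ := ∑ i, DLap i * v i with hDdef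
  -- trace of the Miao-Tam equation
  have htr : -t * N + t - f * R = N := by
    have h := congrArg Matrix.trace hMT
    simp [Matrix.trace_add, Matrix.trace_sub, Matrix.trace_smul, Matrix.trace_one,
      ← hR, smul_eq_mul] at h
    push_cast at h ⊢
    linarith
  -- cleared form of the Laplacian identity
  have hB2 : N * (N - 1) * L = -R * (2 * f * t + 2 * S) - 2 * N * t := by
    rw [hL]; field_simp
  -- cleared form of ⟨∇Δf, ∇f⟩
  have hB3 : (N - 1) * D = -R * S := by
    have hD : D = -(R / (N - 1)) * S := by
      rw [hDdef, hS, Finset.mul_sum]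
      exact Finset.sum_congr rfl fun i _ => by rw [hDLap]; ring
    rw [hD]; field_simp
  -- cleared Bochner formula
  have hB4 : (1 / 2) * (-R * (2 * f * t + 2 * S) - 2 * N * t)
      = N * (N - 1) * (P + Q) - N * (R * S) := by
    linear_combination N * (N - 1) * hBochner - (1 / 2) * hB2 + N * hB3
  -- traceless Hessian norm
  have hHo : (∑ i, ∑ j, ((H - (t / N) • 1) i j) ^ 2) = Q - t ^ 2 / N := by
    have h1 : ∀ i j : Fin n, ((H - (t / N) • 1) i j) ^ 2
        = (H i j) ^ 2 + (if i = j then (t / N) ^ 2 - 2 * (t / N) * H i j else 0) := by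
      intro i j
      simp only [Matrix.sub_apply, Matrix.smul_apply, Matrix.one_apply, smul_eq_mul]
      split <;> ring
    simp only [h1, Finset.sum_add_distrib, Finset.sum_ite_eq, Finset.mem_univ, if_true]
    have htd : t = ∑ i, H i i := by rw [ht]; rfl
    rw [Finset.sum_sub_distrib, Finset.sum_const, Finset.card_univ, Fintype.card_fin,
      ← Finset.mul_sum, ← htd, ← hQ]
    push_cast
    rw [nsmul_eq_mul, ← hNdef]
    field_simp
    ring
  -- traceless Ricci quadratic form
  have hRo : (∑ i, ∑ j, ((Ric - (R / N) • 1) i j) * v i * v j)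
      = P - (R / N) * S := by
    have h1 : ∀ i j : Fin n, ((Ric - (R / N) • 1) i j) * v i * v j
        = Ric i j * v i * v j + (if i = j then -((R / N) * (v i * v j)) else 0) := by
      intro i j
      simp only [Matrix.sub_apply, Matrix.smul_apply, Matrix.one_apply, smul_eq_mul]
      split <;> ring
    simp only [h1, Finset.sum_add_distrib, Finset.sum_ite_eq, Finset.mem_univ, if_true]
    rw [← hP]
    have h2 : ∑ i, -(R / N * (v i * v i)) = -((R / N) * S) := by
      rw [hS, Finset.mul_sum, ← Finset.sum_neg_distrib]
      exact Finset.sum_congr rfl fun i _ => by ring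
    rw [h2]; ring
  rw [hHo, hRo]
  have key : (N - 1) * (N * Q - t ^ 2 + (N * P - R * S)) = 0 := by
    linear_combination (-1 : ℝ) * hB4 + t * htr
  have hG : N * Q - t ^ 2 + (N * P - R * S) = 0 := by
    rcases mul_eq_zero.mp key with h | h
    · exact absurd h hN1
    · exact h
  field_simp
  linarith [hG]
end

section
/- On the standard round sphere 𝕊ⁿ, on the geodesic ball of radius r₀ ≠ π/2 about a point p, the function f = (1/(n-1))(cos r / cos r₀ - 1), where r is geodesic distance to p, satisfies the Miao-Tam equation -(Δf)g + Hess f - f Ric = g and the identity |∇f|² + R f²/(n(n-1)) + 2f/(n-1) = sin²r₀/((n-1)² cos²r₀). -/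
/-- On the round sphere `𝕊ⁿ` (`Ric = (n-1)g`, `R = n(n-1)`), on the
geodesic ball of radius `r₀ ≠ π/2` about `p`, the function
`f = (1/(n-1))(cos r / cos r₀ - 1)` (with `r` the geodesic distance to `p`) satisfies
the Miao-Tam equation and the identity
`|∇f|² + R f²/(n(n-1)) + 2f/(n-1) = sin²r₀/((n-1)² cos²r₀)`.
Pointwise model in an orthonormal frame at a point at distance `r` from `p`:
since `Hess(cos r) = -cos r · g` on `𝕊ⁿ`, the Hessian of `f` is
`H = (-(cos r)/((n-1) cos r₀)) · g`, and since `|∇r| = 1`,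
`|∇f|² = sin²r/((n-1)² cos²r₀)`. -/
theorem sphere_geodesic_ball_miaoTam (n : ℕ) (hn : 3 ≤ n) (r r₀ : ℝ)
    (hr₀ : Real.cos r₀ ≠ 0) :
    let f : ℝ := (1 / ((n : ℝ) - 1)) * (Real.cos r / Real.cos r₀ - 1)
    let H : Matrix (Fin n) (Fin n) ℝ :=
      (-(Real.cos r) / (((n : ℝ) - 1) * Real.cos r₀)) • 1
    let Ric : Matrix (Fin n) (Fin n) ℝ := ((n : ℝ) - 1) • 1
    let R : ℝ := (n : ℝ) * ((n : ℝ) - 1)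
    let grad2 : ℝ := (Real.sin r) ^ 2 / (((n : ℝ) - 1) ^ 2 * (Real.cos r₀) ^ 2)
    ((-(Matrix.trace H)) • (1 : Matrix (Fin n) (Fin n) ℝ) + H - f • Ric
        = (1 : Matrix (Fin n) (Fin n) ℝ)) ∧
    (grad2 + R * f ^ 2 / ((n : ℝ) * ((n : ℝ) - 1)) + 2 * f / ((n : ℝ) - 1)
        = (Real.sin r₀) ^ 2 / (((n : ℝ) - 1) ^ 2 * (Real.cos r₀) ^ 2)) := by
  intro f H Ric R grad2
  have hn1 : ((n:ℝ) - 1) ≠ 0 := by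
    have : (3:ℝ) ≤ (n:ℝ) := by exact_mod_cast hn
    linarith
  have hn0 : ((n:ℝ)) ≠ 0 := by
    have : (3:ℝ) ≤ (n:ℝ) := by exact_mod_cast hn
    linarith
  constructor
  · have htr : Matrix.trace H = (-(Real.cos r) / (((n : ℝ) - 1) * Real.cos r₀)) * n := by
      simp [H, Matrix.trace_smul, Matrix.trace_one, mul_comm]
    rw [htr]
    show _ • (1 : Matrix (Fin n) (Fin n) ℝ) + _ • (1 : Matrix (Fin n) (Fin n) ℝ)
        - f • (((n : ℝ) - 1) • (1 : Matrix (Fin n) (Fin n) ℝ)) = 1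
    rw [smul_smul, ← add_smul, ← sub_smul]
    have : -(-Real.cos r / (((n:ℝ) - 1) * Real.cos r₀) * ↑n)
        + -Real.cos r / (((n:ℝ) - 1) * Real.cos r₀) - f * ((n:ℝ) - 1) = 1 := by
      simp only [f]
      field_simp
      ring
    rw [this, one_smul]
  · have hs : (Real.sin r)^2 = 1 - (Real.cos r)^2 := by
      have := Real.sin_sq_add_cos_sq r; linarith
    have hs0 : (Real.sin r₀)^2 = 1 - (Real.cos r₀)^2 := by
      have := Real.sin_sq_add_cos_sq r₀; linarith
    simp only [grad2, R, f, hs, hs0]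
    field_simp
    ring
end
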